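/- arXiv:1001.3087 — 3 statements merged into one kernel-verified Lean document; each statement's English description precedes it below -/
import Mathlib

section
/- Let (X,Y) be a pair of random variables with X binary, and (X₁,Y₁),(X₂,Y₂) two independent copies. Set U₁ = X₁ ⊕ X₂, U₂ = X₂. Then H(U₁ | Y₁,Y₂) = H(X|Y) holds if and only if H(X|Y) ∈ {0,1}, and the same equivalence holds for H(U₂ | Y₁,Y₂,U₁) = H(X|Y). -/
/-- Conditional Shannon entropy (base 2) of a joint pmf `q x y`. -/
noncomputable def condEnt {α β : Type*} [Fintype α] (q : α → β → ℝ) : ℝ :=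
  ∑' y : β, ∑ x : α, -(q x y * Real.logb 2 (q x y / ∑ x' : α, q x' y))

/-!
Write `m y = p true y + p false y` and `g y = m y * h₂ (p true y / m y)`, so that `H(X|Y) = ∑ g`.
Given `Y₂ = y₂`, the bit `X₁ ⊕ X₂` is a mixture of `X₁` and of `X₁` flipped, so concavity of `h₂`
bounds the summand `G (y₁, y₂)` of `H(U₁|Y₁,Y₂)` below by `g y₁ * m y₂`; hence
`H(X|Y) ≤ H(U₁|Y₁,Y₂) ≤ 1`. With the chain rule `H(U₁|Y₁,Y₂) + H(U₂|Y₁,Y₂,U₁) = 2 H(X|Y)` this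
squeezes both equalities when `H(X|Y) ∈ {0, 1}`. Conversely, equality forces `G = g ⊗ m` termwise;
as `G` is symmetric, `g = H(X|Y) • m`, while on the diagonal strict concavity makes every output
either deterministic (`g y = 0`) or uniform (`g y = m y`).
-/

open Real Set

/-- `binEnt a b = (a + b) * h₂ (a / (a + b))` (`binEnt_eq_mul_binEntropy`), the contribution of an
output `y` with `p true y = a`, `p false y = b` to `H(X|Y)`; in this form homogeneity and the chain
rule are ring identities. -/
noncomputable def binEnt (a b : ℝ) : ℝ := (negMulLog a + negMulLog b - negMulLog (a + b)) / log 2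

lemma binEnt_neg_right (a : ℝ) : binEnt a (-a) = 0 := by
  simp [binEnt, negMulLog, log_neg_eq_log]

lemma neg_add_neg_mul_logb_div (a b : ℝ) :
    -(a * logb 2 (a / (a + b))) + -(b * logb 2 (b / (a + b))) = binEnt a b := by
  rcases eq_or_ne (a + b) 0 with hs | hs
  · rw [eq_neg_of_add_eq_zero_right hs, binEnt_neg_right]; simp
  have key : ∀ x, -(x * logb 2 (x / (a + b))) = (negMulLog x + x * log (a + b)) / log 2 := by
    intro x
    rcases eq_or_ne x 0 with rfl | hx
    · simp
    rw [logb, log_div hx hs, negMulLog]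
    ring
  rw [key, key, binEnt]
  simp only [negMulLog]
  ring

lemma binEnt_mul (c a b : ℝ) : binEnt (c * a) (c * b) = c * binEnt a b := by
  simp only [binEnt, ← mul_add, negMulLog_mul]
  ring

lemma binEnt_comm (a b : ℝ) : binEnt a b = binEnt b a := by
  rw [binEnt, binEnt, add_comm a, add_comm (negMulLog a)]

@[simp] lemma binEnt_zero_left (b : ℝ) : binEnt 0 b = 0 := by simp [binEnt]

@[simp] lemma binEnt_zero_right (a : ℝ) : binEnt a 0 = 0 := by simp [binEnt]

lemma binEnt_self (a : ℝ) : binEnt a a = 2 * a := by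
  have h : binEnt 1 1 = 2 := by
    rw [binEnt, one_add_one_eq_two, negMulLog_one, negMulLog, div_eq_iff (by positivity)]
    ring
  rw [← mul_one a, binEnt_mul, h, mul_one, mul_comm]

lemma binEnt_eq_mul_binEntropy (a b : ℝ) :
    binEnt a b = (a + b) * binEntropy (a / (a + b)) / log 2 := by
  rcases eq_or_ne (a + b) 0 with hs | hs
  · rw [eq_neg_of_add_eq_zero_right hs, binEnt_neg_right]; simp
  have hb : b / (a + b) = 1 - a / (a + b) := by field_simp; ring
  have e : binEnt a b = binEnt ((a + b) * (a / (a + b))) ((a + b) * (b / (a + b))) := by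
    rw [mul_div_cancel₀ _ hs, mul_div_cancel₀ _ hs]
  rw [e, binEnt_mul, hb, binEnt, binEntropy_eq_negMulLog_add_negMulLog_one_sub]
  simp only [add_sub_cancel, negMulLog_one, sub_zero]
  ring

lemma binEnt_nonneg {a b : ℝ} (ha : 0 ≤ a) (hb : 0 ≤ b) : 0 ≤ binEnt a b := by
  rw [binEnt_eq_mul_binEntropy]
  have : a / (a + b) ≤ 1 := div_le_one_of_le₀ (by linarith) (by linarith)
  have := binEntropy_nonneg (div_nonneg ha (add_nonneg ha hb)) this
  positivity

lemma binEnt_le_add {a b : ℝ} (ha : 0 ≤ a) (hb : 0 ≤ b) : binEnt a b ≤ a + b := by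
  rw [binEnt_eq_mul_binEntropy, div_le_iff₀ (by positivity)]
  exact mul_le_mul_of_nonneg_left binEntropy_le_log_two (add_nonneg ha hb)

lemma ConcaveOn.mul_add_mul_le {s : Set ℝ} {f : ℝ → ℝ} (hf : ConcaveOn ℝ s f) {x y a b : ℝ}
    (hx : x ∈ s) (hy : y ∈ s) (ha : 0 ≤ a) (hb : 0 ≤ b) (hab : 0 < a + b) :
    a * f x + b * f y ≤ (a + b) * f ((a * x + b * y) / (a + b)) := by
  have h := hf.2 hx hy (div_nonneg ha hab.le) (div_nonneg hb hab.le) (by field_simp)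
  simp only [smul_eq_mul] at h
  calc a * f x + b * f y = (a + b) * (a / (a + b) * f x + b / (a + b) * f y) := by field_simp
    _ ≤ (a + b) * f (a / (a + b) * x + b / (a + b) * y) := by gcongr
    _ = (a + b) * f ((a * x + b * y) / (a + b)) := by congr 2; field_simp

lemma StrictConcaveOn.mul_add_mul_lt {s : Set ℝ} {f : ℝ → ℝ} (hf : StrictConcaveOn ℝ s f)
    {x y a b : ℝ} (hx : x ∈ s) (hy : y ∈ s) (hxy : x ≠ y) (ha : 0 < a) (hb : 0 < b) :
    a * f x + b * f y < (a + b) * f ((a * x + b * y) / (a + b)) := by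
  have hab : 0 < a + b := add_pos ha hb
  have h := hf.2 hx hy hxy (div_pos ha hab) (div_pos hb hab) (by field_simp)
  simp only [smul_eq_mul] at h
  calc a * f x + b * f y = (a + b) * (a / (a + b) * f x + b / (a + b) * f y) := by field_simp
    _ < (a + b) * f (a / (a + b) * x + b / (a + b) * y) := by gcongr
    _ = (a + b) * f ((a * x + b * y) / (a + b)) := by congr 2; field_simp

lemma div_add_mem_Icc {u v : ℝ} (hu : 0 ≤ u) (hv : 0 ≤ v) : u / (u + v) ∈ Icc (0 : ℝ) 1 :=
  ⟨div_nonneg hu (add_nonneg hu hv),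
    div_le_one_of_le₀ (le_add_of_nonneg_right hv) (add_nonneg hu hv)⟩

lemma binEnt_add_le {u₁ v₁ u₂ v₂ : ℝ} (hu₁ : 0 ≤ u₁) (hv₁ : 0 ≤ v₁) (hu₂ : 0 ≤ u₂)
    (hv₂ : 0 ≤ v₂) : binEnt u₁ v₁ + binEnt u₂ v₂ ≤ binEnt (u₁ + u₂) (v₁ + v₂) := by
  rcases (add_nonneg (add_nonneg hu₁ hv₁) (add_nonneg hu₂ hv₂)).eq_or_lt with h | h
  · obtain ⟨rfl, rfl, rfl, rfl⟩ : u₁ = 0 ∧ v₁ = 0 ∧ u₂ = 0 ∧ v₂ = 0 := by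
      refine ⟨?_, ?_, ?_, ?_⟩ <;> linarith
    simp
  have key := strictConcave_binEntropy.concaveOn.mul_add_mul_le (div_add_mem_Icc hu₁ hv₁)
    (div_add_mem_Icc hu₂ hv₂) (add_nonneg hu₁ hv₁) (add_nonneg hu₂ hv₂) h
  rw [mul_div_cancel_of_imp' (fun h => by linarith), mul_div_cancel_of_imp' (fun h => by linarith),
    show u₁ + v₁ + (u₂ + v₂) = u₁ + u₂ + (v₁ + v₂) by ring] at key
  simp only [binEnt_eq_mul_binEntropy, ← add_div]
  exact div_le_div_of_nonneg_right key (log_pos one_lt_two).le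

lemma binEnt_add_lt {u₁ v₁ u₂ v₂ : ℝ} (hu₁ : 0 ≤ u₁) (hv₁ : 0 ≤ v₁) (hu₂ : 0 ≤ u₂)
    (hv₂ : 0 ≤ v₂) (h₁ : 0 < u₁ + v₁) (h₂ : 0 < u₂ + v₂) (hne : u₁ * v₂ ≠ u₂ * v₁) :
    binEnt u₁ v₁ + binEnt u₂ v₂ < binEnt (u₁ + u₂) (v₁ + v₂) := by
  have hne' : u₁ / (u₁ + v₁) ≠ u₂ / (u₂ + v₂) := by
    rw [ne_eq, div_eq_div_iff h₁.ne' h₂.ne']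
    contrapose! hne
    linarith
  have key := strictConcave_binEntropy.mul_add_mul_lt (div_add_mem_Icc hu₁ hv₁)
    (div_add_mem_Icc hu₂ hv₂) hne' h₁ h₂
  rw [mul_div_cancel₀ _ h₁.ne', mul_div_cancel₀ _ h₂.ne',
    show u₁ + v₁ + (u₂ + v₂) = u₁ + u₂ + (v₁ + v₂) by ring] at key
  simp only [binEnt_eq_mul_binEntropy, ← add_div]
  exact div_lt_div_of_pos_right key (log_pos one_lt_two)

lemma binEnt_xor_split (a₁ b₁ a₂ b₂ : ℝ) :
    binEnt (b₁ * a₂) (a₁ * a₂) + binEnt (a₁ * b₂) (b₁ * b₂) = binEnt a₁ b₁ * (a₂ + b₂) := by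
  rw [mul_comm b₁, mul_comm a₁ a₂, binEnt_mul, binEnt_comm b₁, mul_comm a₁ b₂, mul_comm b₁ b₂,
    binEnt_mul]
  ring

lemma binEnt_mul_le_binEnt_xor {a₁ b₁ a₂ b₂ : ℝ} (ha₁ : 0 ≤ a₁) (hb₁ : 0 ≤ b₁) (ha₂ : 0 ≤ a₂)
    (hb₂ : 0 ≤ b₂) :
    binEnt a₁ b₁ * (a₂ + b₂) ≤ binEnt (b₁ * a₂ + a₁ * b₂) (a₁ * a₂ + b₁ * b₂) := by
  rw [← binEnt_xor_split]
  exact binEnt_add_le (by positivity) (by positivity) (by positivity) (by positivity)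

lemma binEnt_mul_lt_binEnt_xor {a₁ b₁ a₂ b₂ : ℝ} (ha₁ : 0 < a₁) (hb₁ : 0 < b₁) (ha₂ : 0 < a₂)
    (hb₂ : 0 < b₂) (hne : a₁ ≠ b₁) :
    binEnt a₁ b₁ * (a₂ + b₂) < binEnt (b₁ * a₂ + a₁ * b₂) (a₁ * a₂ + b₁ * b₂) := by
  rw [← binEnt_xor_split]
  refine binEnt_add_lt (by positivity) (by positivity) (by positivity) (by positivity)
    (by positivity) (by positivity) fun h => hne ?_
  have hsq : a₁ ^ 2 = b₁ ^ 2 := mul_left_cancel₀ (mul_pos ha₂ hb₂).ne' (by linear_combination -h)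
  exact (sq_eq_sq₀ ha₁.le hb₁.le).1 hsq

lemma binEnt_eq_zero_or_eq_add_of_xor_eq {a b : ℝ} (ha : 0 ≤ a) (hb : 0 ≤ b)
    (h : binEnt (b * a + a * b) (a * a + b * b) = binEnt a b * (a + b)) :
    binEnt a b = 0 ∨ binEnt a b = a + b := by
  rcases ha.eq_or_lt with rfl | ha
  · simp
  rcases hb.eq_or_lt with rfl | hb
  · simp
  by_cases hab : a = b
  · right
    rw [hab, binEnt_self]
    ring
  · exact absurd h (binEnt_mul_lt_binEnt_xor ha hb ha hb hab).ne'

lemma binEnt_chain (a₁ b₁ a₂ b₂ : ℝ) :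
    binEnt (a₁ * a₂) (b₁ * b₂) + binEnt (b₁ * a₂) (a₁ * b₂)
        + binEnt (b₁ * a₂ + a₁ * b₂) (a₁ * a₂ + b₁ * b₂)
      = binEnt a₁ b₁ * (a₂ + b₂) + (a₁ + b₁) * binEnt a₂ b₂ := by
  simp only [binEnt]
  rw [show b₁ * a₂ + a₁ * b₂ + (a₁ * a₂ + b₁ * b₂) = (a₁ + b₁) * (a₂ + b₂) by ring]
  simp only [negMulLog_mul]
  ring

section Series

variable {ι κ : Type*}

lemma HasSum.mul_of_nonneg {f : ι → ℝ} {g : κ → ℝ} {a b : ℝ} (hf : HasSum f a) (hg : HasSum g b)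
    (hf₀ : 0 ≤ f) (hg₀ : 0 ≤ g) : HasSum (fun v : ι × κ => f v.1 * g v.2) (a * b) :=
  hf.mul hg (hf.summable.mul_of_nonneg hg.summable hf₀ hg₀)

lemma HasSum.eq_of_le {α : Type*} [AddCommGroup α] [PartialOrder α] [IsOrderedAddMonoid α]
    [TopologicalSpace α] [IsTopologicalAddGroup α] [OrderClosedTopology α] {f g : ι → α} {a : α}
    (hf : HasSum f a) (hg : HasSum g a) (h : f ≤ g) : f = g := by
  by_contra hne
  obtain ⟨i, hi⟩ := Function.ne_iff.1 hne
  exact lt_irrefl a (hasSum_lt h ((h i).lt_of_ne hi) hf hg)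

lemma summable_binEnt {f g M : ι → ℝ} (hf : 0 ≤ f) (hg : 0 ≤ g) (hM : Summable M)
    (h : ∀ i, f i + g i ≤ M i) : Summable fun i => binEnt (f i) (g i) :=
  hM.of_nonneg_of_le (fun i => binEnt_nonneg (hf i) (hg i))
    fun i => (binEnt_le_add (hf i) (hg i)).trans (h i)

end Series

section CondEnt

variable {γ : Type*}

lemma condEnt_eq_tsum_binEnt (q : Bool → γ → ℝ) :
    condEnt q = ∑' y, binEnt (q true y) (q false y) := by
  simp only [condEnt, Fintype.sum_bool]
  exact tsum_congr fun y => neg_add_neg_mul_logb_div _ _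

lemma condEnt_nonneg {q : Bool → γ → ℝ} (hq : ∀ x y, 0 ≤ q x y) : 0 ≤ condEnt q := by
  rw [condEnt_eq_tsum_binEnt]
  exact tsum_nonneg fun y => binEnt_nonneg (hq _ _) (hq _ _)

lemma hasSum_condEnt {q : Bool → γ → ℝ} (hq : ∀ x y, 0 ≤ q x y)
    (hm : Summable fun y => q true y + q false y) :
    HasSum (fun y => binEnt (q true y) (q false y)) (condEnt q) := by
  rw [condEnt_eq_tsum_binEnt]
  exact (summable_binEnt (hq true) (hq false) hm fun _ => le_rfl).hasSum

end CondEnt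

section Polarization

variable {β : Type*} {p : Bool → β → ℝ}

-- The joint laws of `(U₁, (Y₁, Y₂))` and of `(U₂, (Y₁, Y₂, U₁))`, i.e. the channels `W⁻` and `W⁺`
-- of the polar transform.
def minusLaw (p : Bool → β → ℝ) (u : Bool) (y : β × β) : ℝ :=
  ∑ x₂ : Bool, p (xor u x₂) y.1 * p x₂ y.2

def plusLaw (p : Bool → β → ℝ) (u : Bool) (w : β × β × Bool) : ℝ :=
  p (xor w.2.2 u) w.1 * p u w.2.1

@[simp] lemma minusLaw_true (y : β × β) :
    minusLaw p true y = p false y.1 * p true y.2 + p true y.1 * p false y.2 := by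
  simp [minusLaw]

@[simp] lemma minusLaw_false (y : β × β) :
    minusLaw p false y = p true y.1 * p true y.2 + p false y.1 * p false y.2 := by
  simp [minusLaw]

lemma hasSum_marginal (hsum : HasSum (fun z : Bool × β => p z.1 z.2) 1) :
    HasSum (fun y => p true y + p false y) 1 := by
  have := ((Equiv.prodComm β Bool).hasSum_iff.2 hsum).prod_fiberwise fun y => hasSum_fintype _
  simpa [Fintype.sum_bool] using this

lemma hasSum_binEnt_mul_marginal (hp : ∀ x y, 0 ≤ p x y)
    (hm : HasSum (fun y => p true y + p false y) 1) :
    HasSum (fun v : β × β => binEnt (p true v.1) (p false v.1) * (p true v.2 + p false v.2))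
      (condEnt p) := by
  simpa using (hasSum_condEnt hp hm.summable).mul_of_nonneg hm
    (fun y => binEnt_nonneg (hp _ _) (hp _ _)) fun y => add_nonneg (hp _ _) (hp _ _)

lemma hasSum_marginal_mul_binEnt (hp : ∀ x y, 0 ≤ p x y)
    (hm : HasSum (fun y => p true y + p false y) 1) :
    HasSum (fun v : β × β => (p true v.1 + p false v.1) * binEnt (p true v.2) (p false v.2))
      (condEnt p) := by
  simpa using hm.mul_of_nonneg (hasSum_condEnt hp hm.summable)
    (fun y => add_nonneg (hp _ _) (hp _ _)) fun y => binEnt_nonneg (hp _ _) (hp _ _)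

lemma hasSum_minusLaw_marginal (hp : ∀ x y, 0 ≤ p x y)
    (hm : HasSum (fun y => p true y + p false y) 1) :
    HasSum (fun v => minusLaw p true v + minusLaw p false v) 1 := by
  convert hm.mul_of_nonneg hm (fun y => add_nonneg (hp _ _) (hp _ _))
    (fun y => add_nonneg (hp _ _) (hp _ _)) using 1
  · ext v
    simp only [minusLaw_true, minusLaw_false]
    ring
  · simp

lemma minusLaw_nonneg (hp : ∀ x y, 0 ≤ p x y) (u : Bool) (y : β × β) : 0 ≤ minusLaw p u y :=
  Finset.sum_nonneg fun _ _ => mul_nonneg (hp _ _) (hp _ _)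

lemma plusLaw_nonneg (hp : ∀ x y, 0 ≤ p x y) (u : Bool) (w : β × β × Bool) : 0 ≤ plusLaw p u w :=
  mul_nonneg (hp _ _) (hp _ _)

lemma binEnt_mul_le_binEnt_minusLaw (hp : ∀ x y, 0 ≤ p x y) (v : β × β) :
    binEnt (p true v.1) (p false v.1) * (p true v.2 + p false v.2)
      ≤ binEnt (minusLaw p true v) (minusLaw p false v) := by
  simpa using binEnt_mul_le_binEnt_xor (hp true v.1) (hp false v.1) (hp true v.2) (hp false v.2)

lemma hasSum_condEnt_minusLaw (hp : ∀ x y, 0 ≤ p x y)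
    (hm : HasSum (fun y => p true y + p false y) 1) :
    HasSum (fun v => binEnt (minusLaw p true v) (minusLaw p false v)) (condEnt (minusLaw p)) :=
  hasSum_condEnt (minusLaw_nonneg hp) (hasSum_minusLaw_marginal hp hm).summable

lemma condEnt_le_condEnt_minusLaw (hp : ∀ x y, 0 ≤ p x y)
    (hm : HasSum (fun y => p true y + p false y) 1) : condEnt p ≤ condEnt (minusLaw p) :=
  hasSum_le (binEnt_mul_le_binEnt_minusLaw hp) (hasSum_binEnt_mul_marginal hp hm)
    (hasSum_condEnt_minusLaw hp hm)

lemma condEnt_minusLaw_le_one (hp : ∀ x y, 0 ≤ p x y)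
    (hm : HasSum (fun y => p true y + p false y) 1) : condEnt (minusLaw p) ≤ 1 :=
  hasSum_le (fun _ => binEnt_le_add (minusLaw_nonneg hp _ _) (minusLaw_nonneg hp _ _))
    (hasSum_condEnt_minusLaw hp hm) (hasSum_minusLaw_marginal hp hm)

lemma hasSum_condEnt_plusLaw (hp : ∀ x y, 0 ≤ p x y)
    (hm : HasSum (fun y => p true y + p false y) 1) :
    HasSum (fun v : β × β => binEnt (p true v.1 * p true v.2) (p false v.1 * p false v.2)
      + binEnt (p false v.1 * p true v.2) (p true v.1 * p false v.2)) (condEnt (plusLaw p)) := by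
  have hmarg := (hasSum_minusLaw_marginal hp hm).summable
  have hpp : ∀ x x' y y', 0 ≤ p x y * p x' y' := fun _ _ _ _ => mul_nonneg (hp _ _) (hp _ _)
  have h₀ : Summable fun v : β × β =>
      binEnt (p true v.1 * p true v.2) (p false v.1 * p false v.2) :=
    summable_binEnt (fun _ => hpp _ _ _ _) (fun _ => hpp _ _ _ _) hmarg fun v => by
      simp only [minusLaw_true, minusLaw_false]
      linarith [hpp false true v.1 v.2, hpp true false v.1 v.2]
  have h₁ : Summable fun v : β × β =>
      binEnt (p false v.1 * p true v.2) (p true v.1 * p false v.2) :=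
    summable_binEnt (fun _ => hpp _ _ _ _) (fun _ => hpp _ _ _ _) hmarg fun v => by
      simp only [minusLaw_true, minusLaw_false]
      linarith [hpp true true v.1 v.2, hpp false false v.1 v.2]
  -- `Sum.inl v ↦ (v.1, v.2, false)` and `Sum.inr v ↦ (v.1, v.2, true)`: split the sum over `U₁`.
  let e : (β × β) ⊕ (β × β) ≃ β × β × Bool :=
    (Equiv.boolProdEquivSum _).symm.trans ((Equiv.prodComm _ _).trans (Equiv.prodAssoc _ _ _))
  let F : β × β × Bool → ℝ := fun w => binEnt (plusLaw p true w) (plusLaw p false w)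
  have hF := e.hasSum_iff.1 (HasSum.sum (f := F ∘ e) h₀.hasSum h₁.hasSum)
  rw [condEnt_eq_tsum_binEnt, hF.tsum_eq]
  exact h₀.hasSum.add h₁.hasSum

lemma condEnt_minusLaw_add_condEnt_plusLaw (hp : ∀ x y, 0 ≤ p x y)
    (hm : HasSum (fun y => p true y + p false y) 1) :
    condEnt (minusLaw p) + condEnt (plusLaw p) = 2 * condEnt p := by
  have hsplit := (hasSum_binEnt_mul_marginal hp hm).add (hasSum_marginal_mul_binEnt hp hm)
  have hchain := (hasSum_condEnt_plusLaw hp hm).add (hasSum_condEnt_minusLaw hp hm)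
  simp only [minusLaw_true, minusLaw_false, binEnt_chain] at hchain
  linarith [hchain.unique hsplit]

lemma condEnt_eq_zero_or_eq_one_of_condEnt_minusLaw_eq (hp : ∀ x y, 0 ≤ p x y)
    (hm : HasSum (fun y => p true y + p false y) 1) (h : condEnt (minusLaw p) = condEnt p) :
    condEnt p = 0 ∨ condEnt p = 1 := by
  have hG : ∀ v : β × β, binEnt (minusLaw p true v) (minusLaw p false v)
      = binEnt (p true v.1) (p false v.1) * (p true v.2 + p false v.2) := by
    have := (hasSum_binEnt_mul_marginal hp hm).eq_of_le (h ▸ hasSum_condEnt_minusLaw hp hm)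
      (binEnt_mul_le_binEnt_minusLaw hp)
    exact fun v => (congrFun this v).symm
  have hprop : ∀ y, binEnt (p true y) (p false y) = condEnt p * (p true y + p false y) := by
    intro y
    have hsymm : ∀ y', binEnt (p true y) (p false y) * (p true y' + p false y')
        = binEnt (p true y') (p false y') * (p true y + p false y) := by
      intro y'
      rw [← hG (y, y'), ← hG (y', y)]
      simp only [minusLaw_true, minusLaw_false]
      congr 1 <;> ring
    simpa using (hm.mul_left _).unique (funext hsymm ▸ (hasSum_condEnt hp hm.summable).mul_right _)
  have hdiag : ∀ y, binEnt (p true y) (p false y) = 0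
      ∨ binEnt (p true y) (p false y) = p true y + p false y := fun y =>
    binEnt_eq_zero_or_eq_add_of_xor_eq (hp _ _) (hp _ _) (by simpa using hG (y, y))
  obtain ⟨y, hy⟩ : ∃ y, p true y + p false y ≠ 0 := by
    by_contra! h0
    simp only [h0] at hm
    exact one_ne_zero (hm.unique hasSum_zero)
  rcases hprop y ▸ hdiag y with h0 | h1
  · exact .inl ((mul_eq_zero.1 h0).resolve_right hy)
  · exact .inr ((mul_eq_right₀ hy).1 h1)

end Polarization

/-- Equality holds in the polarization inequalities iff `H(X|Y) ∈ {0,1}`,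
for `U₁ = X₁ ⊕ X₂` and `U₂ = X₂`. -/
theorem stmt2 (p : Bool → ℕ → ℝ) (hp : ∀ x y, 0 ≤ p x y)
    (hsum : HasSum (fun z : Bool × ℕ => p z.1 z.2) 1) :
    (condEnt (fun (u₁ : Bool) (y : ℕ × ℕ) =>
        ∑ x₂ : Bool, p (xor u₁ x₂) y.1 * p x₂ y.2) = condEnt p ↔
      condEnt p = 0 ∨ condEnt p = 1) ∧
    (condEnt (fun (u₂ : Bool) (w : ℕ × ℕ × Bool) =>
        p (xor w.2.2 u₂) w.1 * p u₂ w.2.1) = condEnt p ↔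
      condEnt p = 0 ∨ condEnt p = 1) := by
  have hm := hasSum_marginal hsum
  have hlower := condEnt_le_condEnt_minusLaw hp hm
  have hupper := condEnt_minusLaw_le_one hp hm
  have hchain := condEnt_minusLaw_add_condEnt_plusLaw hp hm
  have hplus := condEnt_nonneg (plusLaw_nonneg hp)
  have hminus : condEnt (minusLaw p) = condEnt p ↔ condEnt p = 0 ∨ condEnt p = 1 :=
    ⟨condEnt_eq_zero_or_eq_one_of_condEnt_minusLaw_eq hp hm, by rintro (h | h) <;> linarith⟩
  refine ⟨hminus, ?_⟩
  change condEnt (plusLaw p) = condEnt p ↔ _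
  rw [← hminus]
  constructor <;> intro <;> linarith
end

section
/- Let (X,Y) be a pair of random variables with X binary and Y taking values in a countable set. Then Z(X|Y)² ≤ H(X|Y), where Z(X|Y) = 2·Σ_y P_Y(y)·√(P_{X|Y}(0|y)·P_{X|Y}(1|y)) and H(X|Y) is the conditional entropy in bits. -/
/-- Conditional source Bhattacharyya parameter `Z(X|Y) = 2 Σ_y √(q(0,y) q(1,y))`. -/
noncomputable def bhat {β : Type*} (q : Bool → β → ℝ) : ℝ :=
  2 * ∑' y : β, Real.sqrt (q false y * q true y)

/-!
Write `a = P(X = 1, Y = y)` and `b = P(X = 0, Y = y)`; the `y`-th summand of `H(X|Y)` is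
`H_y = (a + b) h(a / (a + b))` with `h` the binary entropy in bits. The bound `h(t) ≥ 4 t (1 - t)`
gives `4ab ≤ (a + b) H_y`, and Cauchy–Schwarz turns this into
`(Σ_y 2 √(ab))² ≤ (Σ_y (a + b)) (Σ_y H_y) = H(X|Y)`.
The bound on `h` comes from the expansion
`(1 + s) log (1 + s) + (1 - s) log (1 - s) = Σ_m s^(2m+2) / ((2m+1)(m+1))`:
its coefficients are nonnegative and, by continuity at `s = 1`, sum to at most `2 log 2`.
-/

open Real Filter Topology

lemma hasSum_mul_log_one_add_add_mul_log_one_sub {s : ℝ} (hs : |s| < 1) :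
    HasSum (fun m : ℕ => s ^ (2 * m + 2) / ((2 * m + 1) * (m + 1)))
      ((1 + s) * log (1 + s) + (1 - s) * log (1 - s)) := by
  have hs2 : |s ^ 2| < 1 := by rw [abs_pow, sq_lt_one_iff₀ (abs_nonneg s)]; exact hs
  have h1s : 0 < 1 + s := by linarith [neg_abs_le s]
  have h1s' : 0 < 1 - s := by linarith [le_abs_self s]
  have hsum := ((hasSum_log_sub_log_of_abs_lt_one hs).mul_left s).sub
    (hasSum_pow_div_log_of_abs_lt_one hs2)
  rw [show 1 - s ^ 2 = (1 + s) * (1 - s) by ring, log_mul h1s.ne' h1s'.ne',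
    show ∀ a b : ℝ, s * (a - b) - -(a + b) = (1 + s) * a + (1 - s) * b by intros; ring] at hsum
  refine hsum.congr_fun fun m => ?_
  field_simp
  ring

lemma sum_range_one_div_le_two_mul_log_two (M : ℕ) :
    ∑ m ∈ Finset.range M, 1 / ((2 * m + 1) * (m + 1) : ℝ) ≤ 2 * log 2 := by
  have hpartial : Tendsto
      (fun s : ℝ => ∑ m ∈ Finset.range M, s ^ (2 * m + 2) / ((2 * m + 1) * (m + 1))) (𝓝[<] 1)
      (𝓝 (∑ m ∈ Finset.range M, 1 / ((2 * m + 1) * (m + 1) : ℝ))) := by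
    have hcont : Continuous fun s : ℝ =>
        ∑ m ∈ Finset.range M, s ^ (2 * m + 2) / ((2 * m + 1) * (m + 1)) := by
      fun_prop
    simpa using hcont.continuousWithinAt.tendsto (s := Set.Iio 1) (x := 1)
  have hlimit : Tendsto (fun s : ℝ => (1 + s) * log (1 + s) + (1 - s) * log (1 - s))
      (𝓝[<] 1) (𝓝 (2 * log 2)) := by
    have hcont : Continuous fun s : ℝ => (1 + s) * log (1 + s) + (1 - s) * log (1 - s) :=
      (continuous_mul_log.comp (by fun_prop)).add (continuous_mul_log.comp (by fun_prop))
    simpa [one_add_one_eq_two] using hcont.continuousWithinAt.tendsto (s := Set.Iio 1) (x := 1)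
  refine le_of_tendsto_of_tendsto hpartial hlimit ?_
  filter_upwards [Ioo_mem_nhdsLT (show (0 : ℝ) < 1 by norm_num)] with s hs
  exact sum_le_hasSum _ (fun m _ => by have := hs.1.le; positivity)
    (hasSum_mul_log_one_add_add_mul_log_one_sub (abs_lt.2 ⟨by linarith [hs.1], hs.2⟩))

lemma mul_log_one_add_add_mul_log_one_sub_le {s : ℝ} (hs : |s| < 1) :
    (1 + s) * log (1 + s) + (1 - s) * log (1 - s) ≤ 2 * log 2 * s ^ 2 := by
  have hseries := hasSum_mul_log_one_add_add_mul_log_one_sub hs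
  have hcoeff : Summable fun m : ℕ => 1 / ((2 * m + 1) * (m + 1) : ℝ) :=
    summable_of_sum_range_le (fun m => by positivity) sum_range_one_div_le_two_mul_log_two
  have hs2 : s ^ 2 ≤ 1 := by nlinarith [abs_lt.1 hs]
  calc (1 + s) * log (1 + s) + (1 - s) * log (1 - s)
      = ∑' m : ℕ, s ^ (2 * m + 2) / ((2 * m + 1) * (m + 1)) := hseries.tsum_eq.symm
    _ ≤ ∑' m : ℕ, s ^ 2 * (1 / ((2 * m + 1) * (m + 1))) := by
      refine hseries.summable.tsum_le_tsum (fun m => ?_) (hcoeff.mul_left _)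
      rw [mul_one_div, pow_add, pow_mul]
      gcongr
      exact mul_le_of_le_one_left (sq_nonneg s) (pow_le_one₀ (sq_nonneg s) hs2)
    _ = s ^ 2 * ∑' m : ℕ, 1 / ((2 * m + 1) * (m + 1) : ℝ) := tsum_mul_left
    _ ≤ s ^ 2 * (2 * log 2) := by
      gcongr
      exact Real.tsum_le_of_sum_range_le (fun m => by positivity)
        sum_range_one_div_le_two_mul_log_two
    _ = 2 * log 2 * s ^ 2 := by ring

lemma four_mul_log_two_mul_le_binEntropy {p : ℝ} (hp₀ : 0 ≤ p) (hp₁ : p ≤ 1) :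
    4 * log 2 * (p * (1 - p)) ≤ binEntropy p := by
  rcases hp₀.eq_or_lt with rfl | hp₀
  · simp
  rcases hp₁.eq_or_lt with rfl | hp₁
  · simp
  have hbound := mul_log_one_add_add_mul_log_one_sub_le (s := 2 * p - 1)
    (abs_lt.2 ⟨by linarith, by linarith⟩)
  rw [show 1 + (2 * p - 1) = 2 * p by ring, show 1 - (2 * p - 1) = 2 * (1 - p) by ring,
    log_mul two_ne_zero hp₀.ne', log_mul two_ne_zero (by linarith)] at hbound
  rw [binEntropy_eq_negMulLog_add_negMulLog_one_sub, negMulLog, negMulLog]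
  linarith

lemma neg_mul_logb_div_add_neg_mul_logb_div (a b : ℝ) :
    -(a * logb 2 (a / (a + b))) + -(b * logb 2 (b / (a + b)))
      = (a + b) * binEntropy (a / (a + b)) / log 2 := by
  rcases eq_or_ne (a + b) 0 with hab | hab
  · simp [hab]
  have hcompl : 1 - a / (a + b) = b / (a + b) := by field_simp; ring
  rw [binEntropy_eq_negMulLog_add_negMulLog_one_sub, hcompl, negMulLog, negMulLog, logb, logb]
  field_simp

lemma mul_binEntropy_div_nonneg {a b : ℝ} (ha : 0 ≤ a) (hb : 0 ≤ b) :
    0 ≤ (a + b) * binEntropy (a / (a + b)) / log 2 := by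
  have := binEntropy_nonneg (div_nonneg ha (add_nonneg ha hb))
    (div_le_one_of_le₀ (le_add_of_nonneg_right hb) (add_nonneg ha hb))
  positivity

lemma mul_binEntropy_div_le {a b : ℝ} (ha : 0 ≤ a) (hb : 0 ≤ b) :
    (a + b) * binEntropy (a / (a + b)) / log 2 ≤ a + b := by
  rw [div_le_iff₀ (log_pos one_lt_two)]
  exact mul_le_mul_of_nonneg_left binEntropy_le_log_two (add_nonneg ha hb)

lemma four_mul_mul_le_mul_binEntropy_div {a b : ℝ} (ha : 0 ≤ a) (hb : 0 ≤ b) :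
    4 * (a * b) ≤ (a + b) * ((a + b) * binEntropy (a / (a + b)) / log 2) := by
  rcases (add_nonneg ha hb).eq_or_lt with hab | hab
  · obtain ⟨rfl, rfl⟩ : a = 0 ∧ b = 0 := ⟨by linarith, by linarith⟩
    simp
  have hbound := four_mul_log_two_mul_le_binEntropy (div_nonneg ha hab.le)
    (div_le_one_of_le₀ (le_add_of_nonneg_right hb) hab.le)
  have hcompl : 1 - a / (a + b) = b / (a + b) := by field_simp; ring
  rw [hcompl] at hbound
  rw [← mul_div_assoc, le_div_iff₀ (log_pos one_lt_two)]
  calc 4 * (a * b) * log 2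
        = (a + b) * ((a + b) * (4 * log 2 * (a / (a + b) * (b / (a + b))))) := by field_simp
    _ ≤ (a + b) * ((a + b) * binEntropy (a / (a + b))) := by gcongr

lemma sq_tsum_le_tsum_mul_tsum_of_sq_le_mul {ι : Type*} {w u v : ι → ℝ} (hw : ∀ i, 0 ≤ w i)
    (hu : ∀ i, 0 ≤ u i) (hv : ∀ i, 0 ≤ v i) (hwuv : ∀ i, w i ^ 2 ≤ u i * v i)
    (hu_sum : Summable u) (hv_sum : Summable v) :
    (∑' i, w i) ^ 2 ≤ (∑' i, u i) * ∑' i, v i := by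
  have hsq {f : ι → ℝ} (hf : ∀ i, 0 ≤ f i) : (fun i => √(f i) ^ (2 : ℝ)) = f := by
    ext i; rw [rpow_two, sq_sqrt (hf i)]
  have hholder := summable_and_inner_le_Lp_mul_Lq_tsum_of_nonneg Real.HolderConjugate.two_two
    (fun i => sqrt_nonneg (u i)) (fun i => sqrt_nonneg (v i))
    (by rwa [hsq hu]) (by rwa [hsq hv])
  rw [hsq hu, hsq hv, ← sqrt_eq_rpow, ← sqrt_eq_rpow, ← sqrt_mul (tsum_nonneg hu)] at hholder
  have hw_le : ∀ i, w i ≤ √(u i) * √(v i) := fun i => by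
    rw [← sqrt_mul (hu i), ← sqrt_sq (hw i)]
    exact sqrt_le_sqrt (hwuv i)
  have hw_sum : Summable w := hholder.1.of_nonneg_of_le hw hw_le
  calc (∑' i, w i) ^ 2 ≤ √((∑' i, u i) * ∑' i, v i) ^ 2 := by
        gcongr
        · exact tsum_nonneg hw
        · exact (hw_sum.tsum_le_tsum hw_le hholder.1).trans hholder.2
    _ = (∑' i, u i) * ∑' i, v i := sq_sqrt (mul_nonneg (tsum_nonneg hu) (tsum_nonneg hv))

/-- `Z(X|Y)² ≤ H(X|Y)`. -/
theorem stmt8 (p : Bool → ℕ → ℝ) (hp : ∀ x y, 0 ≤ p x y)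
    (hsum : HasSum (fun z : Bool × ℕ => p z.1 z.2) 1) :
    (bhat p) ^ 2 ≤ condEnt p := by
  have hrow (x : Bool) : Summable fun y => p x y := hsum.summable.prod_factor x
  set S : ℕ → ℝ := fun y => p true y + p false y
  set H : ℕ → ℝ := fun y => S y * binEntropy (p true y / S y) / log 2
  have hS_sum : Summable S := (hrow true).add (hrow false)
  have hS_tsum : ∑' y, S y = 1 := by
    have htotal := hsum.tsum_eq
    rw [hsum.summable.tsum_prod, tsum_fintype, Fintype.sum_bool] at htotal
    rwa [(hrow true).tsum_add (hrow false)]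
  have hH_nonneg (y : ℕ) : 0 ≤ H y := mul_binEntropy_div_nonneg (hp _ _) (hp _ _)
  have hH_sum : Summable H :=
    hS_sum.of_nonneg_of_le hH_nonneg fun y => mul_binEntropy_div_le (hp _ _) (hp _ _)
  have hbhat : bhat p = ∑' y, 2 * √(p false y * p true y) := tsum_mul_left.symm
  have hcondEnt : condEnt p = ∑' y, H y := tsum_congr fun y => by
    rw [Fintype.sum_bool, Fintype.sum_bool]
    exact neg_mul_logb_div_add_neg_mul_logb_div _ _
  rw [hbhat, hcondEnt, ← one_mul (∑' y, H y), ← hS_tsum]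
  refine sq_tsum_le_tsum_mul_tsum_of_sq_le_mul (fun y => by positivity)
    (fun y => add_nonneg (hp _ _) (hp _ _)) hH_nonneg (fun y => ?_) hS_sum hH_sum
  rw [mul_pow, sq_sqrt (mul_nonneg (hp _ _) (hp _ _))]
  linarith [four_mul_mul_le_mul_binEntropy_div (hp true y) (hp false y)]
end

section
/- Let (X,Y) be a pair of random variables with X binary and Y countable-valued. Then H(X|Y) ≤ log₂(1 + Z(X|Y)), where Z(X|Y) = 2·Σ_y P_Y(y)·√(P_{X|Y}(0|y)·P_{X|Y}(1|y)). -/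
open Real

namespace Real

lemma mul_log_div_nonneg {w u : ℝ} (hw : 0 ≤ w) (hwu : w ≤ u) : 0 ≤ w * log (u / w) := by
  rcases hw.eq_or_lt with rfl | hw
  · simp
  · exact mul_nonneg hw.le (log_nonneg ((one_le_div hw).2 hwu))

lemma neg_mul_log_div_nonneg {q s : ℝ} (hq : 0 ≤ q) (hqs : q ≤ s) : 0 ≤ -(q * log (q / s)) :=
  neg_nonneg.2 <| mul_nonpos_of_nonneg_of_nonpos hq <|
    log_nonpos (div_nonneg hq (hq.trans hqs)) (div_le_one_of_le₀ hqs (hq.trans hqs))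

lemma mul_log_div_le {w u c : ℝ} (hw : 0 ≤ w) (hwu : w ≤ u) (hc : 0 < c) :
    w * log (u / w) ≤ w * log c + u / c - w := by
  rcases hw.eq_or_lt with rfl | hw
  · simpa using div_nonneg hwu hc.le
  have hu : 0 < u := hw.trans_le hwu
  have htangent : log (u / (w * c)) ≤ u / (w * c) - 1 := log_le_sub_one_of_pos (by positivity)
  rw [log_div hu.ne' (by positivity), log_mul hw.ne' hc.ne'] at htangent
  rw [log_div hu.ne' hw.ne']
  have hwuc : w * (u / (w * c)) = u / c := by field_simp
  nlinarith [mul_le_mul_of_nonneg_left htangent hw.le]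

lemma mul_sqrt_div_self {x y : ℝ} (hx : 0 ≤ x) (hy : 0 ≤ y) : x * √y / y = √(x ^ 2 / y) := by
  rcases hy.eq_or_lt with rfl | hy
  · simp
  · rw [sqrt_div' _ hy.le, sqrt_sq hx, mul_div_assoc, sqrt_div_self']
    ring

lemma two_mul_sqrt_mul_le_add {a b : ℝ} (ha : 0 ≤ a) (hb : 0 ≤ b) : 2 * √(a * b) ≤ a + b := by
  simpa [sqrt_mul ha, sq_sqrt ha, sq_sqrt hb, mul_assoc] using two_mul_le_add_sq √a √b

end Real

section WeightedLog

variable {ι : Type*} {w u : ι → ℝ}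

lemma summable_mul_log_div (hw : ∀ i, 0 ≤ w i) (hwu : ∀ i, w i ≤ u i) (hu : Summable u) :
    Summable fun i => w i * log (u i / w i) :=
  hu.of_nonneg_of_le (fun i => mul_log_div_nonneg (hw i) (hwu i)) fun i => by
    simpa using (mul_log_div_le (hw i) (hwu i) one_pos).trans (sub_le_self _ (hw i))

lemma tsum_mul_log_div_le {W U : ℝ} (hw : ∀ i, 0 ≤ w i) (hwu : ∀ i, w i ≤ u i)
    (hW : HasSum w W) (hU : HasSum u U) :
    ∑' i, w i * log (u i / w i) ≤ W * log (U / W) := by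
  rcases (hW.nonneg hw).eq_or_lt with rfl | hW0
  · simp [(hasSum_zero_iff_of_nonneg hw).1 hW]
  have hU0 : 0 < U := hW0.trans_le (hasSum_le hwu hW hU)
  have htangent : HasSum (fun i => w i * log (U / W) + u i / (U / W) - w i)
      (W * log (U / W) + U / (U / W) - W) :=
    ((hW.mul_right _).add (hU.div_const _)).sub hW
  have hUW : U / (U / W) = W := by field_simp
  rw [hUW, add_sub_cancel_right] at htangent
  exact hasSum_le (fun i => mul_log_div_le (hw i) (hwu i) (by positivity))
    (summable_mul_log_div hw hwu hU.summable).hasSum htangent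

end WeightedLog

lemma sum_neg_mul_log_div_sum_le {α : Type*} [Fintype α] {q : α → ℝ} (hq : ∀ x, 0 ≤ q x) :
    ∑ x, -(q x * log (q x / ∑ x', q x')) ≤
      (∑ x, q x) * log ((∑ x, √(q x)) ^ 2 / ∑ x, q x) := by
  set S := ∑ x, q x
  have hqS : ∀ x, q x ≤ S := fun x => Finset.single_le_sum (fun x _ => hq x) (Finset.mem_univ x)
  have hS : 0 ≤ S := Finset.sum_nonneg fun x _ => hq x
  have hqu : ∀ x, q x ≤ √(q x) * √S := fun x => by
    simpa only [mul_self_sqrt (hq x)] using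
      mul_le_mul_of_nonneg_left (sqrt_le_sqrt (hqS x)) (sqrt_nonneg (q x))
  have hJensen := tsum_mul_log_div_le hq hqu (hasSum_fintype q) (hasSum_fintype _)
  rw [tsum_fintype, ← Finset.sum_mul,
    mul_sqrt_div_self (Finset.sum_nonneg fun x _ => sqrt_nonneg _) hS, log_sqrt (by positivity)]
    at hJensen
  have hterm : ∀ x, q x * log (√(q x) * √S / q x) = -(q x * log (q x / S)) / 2 := fun x => by
    rw [mul_comm √(q x), mul_sqrt_div_self (sqrt_nonneg S) (hq x), sq_sqrt hS,
      log_sqrt (div_nonneg hS (hq x)), ← inv_div (q x), log_inv]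
    ring
  simp only [hterm, ← Finset.sum_div] at hJensen
  linarith

lemma sum_neg_mul_log_div_sum_nonneg {α : Type*} [Fintype α] {q : α → ℝ} (hq : ∀ x, 0 ≤ q x) :
    0 ≤ ∑ x, -(q x * log (q x / ∑ x', q x')) :=
  Finset.sum_nonneg fun x _ =>
    neg_mul_log_div_nonneg (hq x) (Finset.single_le_sum (fun x' _ => hq x') (Finset.mem_univ x))

lemma sq_sum_sqrt_bool {q : Bool → ℝ} (hq : ∀ x, 0 ≤ q x) :
    (∑ x, √(q x)) ^ 2 = ∑ x, q x + 2 * √(q false * q true) := by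
  rw [Fintype.sum_bool, Fintype.sum_bool, add_sq, sq_sqrt (hq true), sq_sqrt (hq false),
    sqrt_mul (hq false)]
  ring

lemma HasSum.sum_fst_of_fintype {α β : Type*} [Fintype α] {f : α → β → ℝ} {a : ℝ}
    (h : HasSum (fun z : α × β => f z.1 z.2) a) : HasSum (fun y => ∑ x, f x y) a :=
  ((Equiv.prodComm β α).hasSum_iff.2 h).prod_fiberwise fun _ => hasSum_fintype _

lemma condEnt_eq_tsum_div_log {α β : Type*} [Fintype α] (q : α → β → ℝ) :
    condEnt q = (∑' y, ∑ x, -(q x y * log (q x y / ∑ x', q x' y))) / log 2 := by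
  rw [condEnt, ← tsum_div_const]
  simp only [logb, Finset.sum_div, neg_div, mul_div_assoc]

/-- `H(X|Y) ≤ log₂(1 + Z(X|Y))`. -/
theorem stmt10 (p : Bool → ℕ → ℝ) (hp : ∀ x y, 0 ≤ p x y)
    (hsum : HasSum (fun z : Bool × ℕ => p z.1 z.2) 1) :
    condEnt p ≤ Real.logb 2 (1 + bhat p) := by
  set w : ℕ → ℝ := fun y => ∑ x, p x y
  set u : ℕ → ℝ := fun y => (∑ x, √(p x y)) ^ 2
  have hw : HasSum w 1 := hsum.sum_fst_of_fintype
  have hw0 : ∀ y, 0 ≤ w y := fun y => Finset.sum_nonneg fun x _ => hp x y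
  have hu_eq : ∀ y, u y = w y + 2 * √(p false y * p true y) :=
    fun y => sq_sum_sqrt_bool (hp · y)
  have hwu : ∀ y, w y ≤ u y := fun y => by rw [hu_eq]; linarith [sqrt_nonneg (p false y * p true y)]
  have hbhat : Summable fun y => √(p false y * p true y) :=
    hw.summable.of_nonneg_of_le (fun y => sqrt_nonneg _) fun y => by
      have := two_mul_sqrt_mul_le_add (hp false y) (hp true y)
      simp only [w, Fintype.sum_bool]
      linarith [sqrt_nonneg (p false y * p true y)]
  have hu : HasSum u (1 + bhat p) := by
    rw [show u = _ from funext hu_eq, bhat]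
    exact hw.add (hbhat.hasSum.mul_left 2)
  have hentropy : ∀ y, ∑ x, -(p x y * log (p x y / w y)) ≤ w y * log (u y / w y) :=
    fun y => sum_neg_mul_log_div_sum_le (hp · y)
  have hsummable := summable_mul_log_div hw0 hwu hu.summable
  rw [condEnt_eq_tsum_div_log, logb]
  gcongr
  calc _ ≤ ∑' y, w y * log (u y / w y) :=
        Summable.tsum_le_tsum hentropy
          (hsummable.of_nonneg_of_le (fun y => sum_neg_mul_log_div_sum_nonneg (hp · y)) hentropy)
          hsummable
    _ ≤ 1 * log ((1 + bhat p) / 1) := tsum_mul_log_div_le hw0 hwu hw hu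
    _ = log (1 + bhat p) := by simp
end
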